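/- arXiv:2311.03346 — 3 statements merged into one kernel-verified Lean document; each statement's English description precedes it below -/
import Mathlib

section
/- Let E be a finite ground set and 𝒫 ⊆ 2^E, and suppose (E,𝒫) has a special cycle (C,𝒞) of odd length k ≥ 3, with C = {e_1,…,e_k} and 𝒞 = {P_1,…,P_k}. Define ρ ∈ [0,1]^E by ρ_e := 1/2 for e ∈ C and ρ_e := 0 for e ∈ E∖C. Then ρ has no perfect decomposition for 𝒫. In particular, (E,𝒫) is not decomposition-friendly. -/
open Finset

variable {α : Type*} [Fintype α] [DecidableEq α]

/-- `z` is a feasible decomposition of `ρ` for `(E, PP, π)`. -/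
def IsFeasibleDecomposition (PP : Finset (Finset α)) (π : Finset α → ℝ) (ρ : α → ℝ)
    (z : Finset α → ℝ) : Prop :=
  (∀ S, 0 ≤ z S ∧ z S ≤ 1) ∧
  (∑ S : Finset α, z S = 1) ∧
  (∀ P ∈ PP, π P ≤ ∑ S ∈ Finset.univ.filter (fun S => (S ∩ P).Nonempty), z S) ∧
  (∀ e : α, ∑ S ∈ Finset.univ.filter (fun S => e ∈ S), z S = ρ e)

/-- `e 0, …, e (k-1)` and `Ps 0, …, Ps (k-1)` form a special cycle of length `k` of `(E, PP)`. -/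
def IsSpecialCycle (PP : Finset (Finset α)) (k : ℕ) (e : ℕ → α) (Ps : ℕ → Finset α) : Prop :=
  (∀ i < k, ∀ j < k, e i = e j → i = j) ∧ (∀ i < k, Ps i ∈ PP) ∧
  (∀ i < k, Ps i ∩ (Finset.range k).image e = {e i, e ((i + 1) % k)})

/-- Resolution of `(i+1) % k` for `i < k`. -/
lemma succ_mod_eq (k i : ℕ) (hi : i < k) : (i + 1) % k = if i + 1 < k then i + 1 else 0 := by
  split_ifs with h
  · exact Nat.mod_eq_of_lt h
  · have : i + 1 = k := by omega
    simp [this]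

/-- A vertex cover of an odd cycle of length `k` has at least `(k+1)/2` elements. -/
lemma cycle_cover (k : ℕ) (hodd : Odd k) (T : Finset ℕ) (hT : T ⊆ Finset.range k)
    (hcov : ∀ i < k, i ∈ T ∨ (i + 1) % k ∈ T) : k + 1 ≤ 2 * T.card := by
  have hk0 : 0 < k := hodd.pos
  set T' : Finset ℕ := Finset.range k \ T with hT'
  have hcardT : T.card ≤ k := by
    simpa using Finset.card_le_card hT
  have hcardsum : T.card + T'.card = k := by
    rw [hT', Finset.card_sdiff_of_subset hT, Finset.card_range]
    omega
  set f : ℕ → ℕ := fun i => (i + 1) % k with hf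
  have himg : T'.image f ⊆ Finset.range k := by
    intro x hx
    simp only [Finset.mem_image] at hx
    obtain ⟨i, _, rfl⟩ := hx
    exact Finset.mem_range.2 (Nat.mod_lt _ hk0)
  have hdisj : Disjoint T' (T'.image f) := by
    rw [Finset.disjoint_right]
    intro x hx hx'
    simp only [Finset.mem_image] at hx
    obtain ⟨i, hi, rfl⟩ := hx
    have hik : i < k := Finset.mem_range.1 (Finset.mem_sdiff.1 hi).1
    have h1 : i ∉ T := (Finset.mem_sdiff.1 hi).2
    have h2 : f i ∉ T := (Finset.mem_sdiff.1 hx').2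
    rcases hcov i hik with h | h
    · exact h1 h
    · exact h2 h
  have hinj : Set.InjOn f T' := by
    intro a ha b hb hab
    have hak : a < k := Finset.mem_range.1 (Finset.mem_sdiff.1 ha).1
    have hbk : b < k := Finset.mem_range.1 (Finset.mem_sdiff.1 hb).1
    simp only [hf] at hab
    rw [succ_mod_eq k a hak, succ_mod_eq k b hbk] at hab
    split_ifs at hab <;> omega
  have hcard2 : 2 * T'.card ≤ k := by
    have h1 : (T' ∪ T'.image f).card = T'.card + (T'.image f).card :=
      Finset.card_union_of_disjoint hdisj
    have h2 : (T'.image f).card = T'.card := Finset.card_image_of_injOn hinj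
    have h3 : T' ∪ T'.image f ⊆ Finset.range k :=
      Finset.union_subset Finset.sdiff_subset himg
    have h4 : (T' ∪ T'.image f).card ≤ k := by
      simpa using Finset.card_le_card h3
    omega
  obtain ⟨m, hm⟩ := hodd
  omega

/-- If `(E, PP)` has a special cycle of odd length `k ≥ 3` with element set `C`, then the
marginal vector `ρ` with `ρ e = 1/2` on `C` and `ρ e = 0` elsewhere has no perfect decomposition
for `PP`; in particular, `(E, PP)` is not decomposition-friendly. -/
theorem odd_special_cycle_no_perfect_decomposition (PP : Finset (Finset α))
    (k : ℕ) (e : ℕ → α) (Ps : ℕ → Finset α)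
    (hk : 3 ≤ k) (hodd : Odd k) (hcyc : IsSpecialCycle PP k e Ps) :
    (¬ ∃ z, IsFeasibleDecomposition PP
      (fun P => min (∑ x ∈ P, (if x ∈ (Finset.range k).image e then (1 : ℝ) / 2 else 0)) 1)
      (fun x => if x ∈ (Finset.range k).image e then (1 : ℝ) / 2 else 0) z) ∧
    ¬ (∀ ρ : α → ℝ, (∀ x, 0 ≤ ρ x ∧ ρ x ≤ 1) →
      ∃ z, IsFeasibleDecomposition PP (fun P => min (∑ x ∈ P, ρ x) 1) ρ z) := by
  obtain ⟨hinj, hPP, hcap⟩ := hcyc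
  have hk0 : 0 < k := by omega
  set C : Finset α := (Finset.range k).image e with hC
  have heC : ∀ i < k, e i ∈ C := by
    intro i hi
    exact Finset.mem_image.2 ⟨i, Finset.mem_range.2 hi, rfl⟩
  have hne : ∀ i < k, e i ≠ e ((i + 1) % k) := by
    intro i hi h
    have h2 : (i + 1) % k < k := Nat.mod_lt _ hk0
    have := hinj i hi ((i + 1) % k) h2 h
    rw [succ_mod_eq k i hi] at this
    split_ifs at this <;> omega
  have main : ¬ ∃ z, IsFeasibleDecomposition PP
      (fun P => min (∑ x ∈ P, (if x ∈ C then (1 : ℝ) / 2 else 0)) 1)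
      (fun x => if x ∈ C then (1 : ℝ) / 2 else 0) z := by
    rintro ⟨z, hz01, hzsum, hzP, hzm⟩
    have hz0 : ∀ S, 0 ≤ z S := fun S => (hz01 S).1
    -- all sets in the support of z are subsets of C
    have hsupp : ∀ S : Finset α, z S ≠ 0 → S ⊆ C := by
      intro S hS x hx
      by_contra hxC
      have h0 : ∑ S ∈ Finset.univ.filter (fun S => x ∈ S), z S = 0 := by
        rw [hzm x]; simp [hxC]
      have hz : z S = 0 :=
        (Finset.sum_eq_zero_iff_of_nonneg (fun S _ => hz0 S)).1 h0 S (by simp [hx])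
      exact hS hz
    -- π (Ps i) = 1
    have hpi : ∀ i < k, ∑ x ∈ Ps i, (if x ∈ C then (1 : ℝ) / 2 else 0) = 1 := by
      intro i hi
      rw [Finset.sum_ite_mem, hcap i hi, Finset.sum_pair (hne i hi)]
      norm_num
    -- every set in the support of z meets every Ps i
    have hmeet : ∀ i < k, ∀ S : Finset α, z S ≠ 0 → (S ∩ Ps i).Nonempty := by
      intro i hi S hS
      by_contra hemp
      have h1 : (1 : ℝ) ≤
          ∑ S ∈ Finset.univ.filter (fun S => (S ∩ Ps i).Nonempty), z S := by
        have h := hzP (Ps i) (hPP i hi)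
        simp only [hpi i hi, min_self] at h
        exact h
      have hsplit :
          (∑ S ∈ Finset.univ.filter (fun S => (S ∩ Ps i).Nonempty), z S)
          + ∑ S ∈ Finset.univ.filter (fun S => ¬ (S ∩ Ps i).Nonempty), z S = 1 := by
        rw [Finset.sum_filter_add_sum_filter_not]; exact hzsum
      have hzSpos : 0 < z S := lt_of_le_of_ne (hz0 S) (Ne.symm hS)
      have hSin : S ∈ Finset.univ.filter (fun S => ¬ (S ∩ Ps i).Nonempty) := by
        simp [Finset.not_nonempty_iff_eq_empty.1 hemp]
      have hle : z S ≤ ∑ S ∈ Finset.univ.filter (fun S => ¬ (S ∩ Ps i).Nonempty), z S :=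
        Finset.single_le_sum (fun s _ => hz0 s) hSin
      linarith
    -- the counting argument
    set F : Finset α → ℕ := fun S => ((Finset.range k).filter (fun i => e i ∈ S)).card with hF
    have claimB : ∑ i ∈ Finset.range k, ∑ S ∈ Finset.univ.filter (fun S => e i ∈ S), z S
        = ∑ S : Finset α, (F S : ℝ) * z S := by
      calc ∑ i ∈ Finset.range k, ∑ S ∈ Finset.univ.filter (fun S => e i ∈ S), z S
          = ∑ i ∈ Finset.range k, ∑ S : Finset α, if e i ∈ S then z S else 0 := by
            simp [Finset.sum_filter]
        _ = ∑ S : Finset α, ∑ i ∈ Finset.range k, if e i ∈ S then z S else 0 :=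
            Finset.sum_comm
        _ = ∑ S : Finset α, (F S : ℝ) * z S := by
            refine Finset.sum_congr rfl fun S _ => ?_
            rw [← Finset.sum_filter, Finset.sum_const, nsmul_eq_mul, hF]
    have claimA : ∑ i ∈ Finset.range k, ∑ S ∈ Finset.univ.filter (fun S => e i ∈ S), z S
        = (k : ℝ) / 2 := by
      have : ∀ i ∈ Finset.range k,
          ∑ S ∈ Finset.univ.filter (fun S => e i ∈ S), z S = 1 / 2 := by
        intro i hi
        rw [hzm (e i)]
        simp [heC i (Finset.mem_range.1 hi)]
      rw [Finset.sum_congr rfl this, Finset.sum_const, Finset.card_range, nsmul_eq_mul]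
      ring
    have claimC : ∀ S : Finset α, z S ≠ 0 → (k : ℝ) + 1 ≤ 2 * F S := by
      intro S hS
      have hcov : ∀ i < k, i ∈ (Finset.range k).filter (fun i => e i ∈ S) ∨
          (i + 1) % k ∈ (Finset.range k).filter (fun i => e i ∈ S) := by
        intro i hi
        obtain ⟨x, hx⟩ := hmeet i hi S hS
        have hxS : x ∈ S := (Finset.mem_inter.1 hx).1
        have hxP : x ∈ Ps i := (Finset.mem_inter.1 hx).2
        have hxcap : x ∈ Ps i ∩ (Finset.range k).image e := by
          refine Finset.mem_inter.2 ⟨hxP, ?_⟩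
          exact hsupp S hS hxS
        rw [hcap i hi] at hxcap
        rcases Finset.mem_insert.1 hxcap with h | h
        · left
          refine Finset.mem_filter.2 ⟨Finset.mem_range.2 hi, ?_⟩
          rw [← h]; exact hxS
        · right
          refine Finset.mem_filter.2 ⟨Finset.mem_range.2 (Nat.mod_lt _ hk0), ?_⟩
          rw [← Finset.mem_singleton.1 h]; exact hxS
      have := cycle_cover k hodd _ (Finset.filter_subset _ _) hcov
      have h2 : (k : ℝ) + 1 ≤ 2 * ((((Finset.range k).filter (fun i => e i ∈ S)).card : ℕ) : ℝ) := by
        exact_mod_cast this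
      simpa [hF] using h2
    have hfinal : ((k : ℝ) + 1) / 2 ≤ (k : ℝ) / 2 := by
      have h1 : ∑ S : Finset α, ((k : ℝ) + 1) / 2 * z S ≤ ∑ S : Finset α, (F S : ℝ) * z S := by
        refine Finset.sum_le_sum fun S _ => ?_
        by_cases hS : z S = 0
        · simp [hS]
        · have := claimC S hS
          have hle : ((k : ℝ) + 1) / 2 ≤ (F S : ℝ) := by linarith
          exact mul_le_mul_of_nonneg_right hle (hz0 S)
      rw [← Finset.mul_sum, hzsum, mul_one] at h1
      rw [← claimB, claimA] at h1
      exact h1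
    linarith
  refine ⟨main, ?_⟩
  intro hall
  apply main
  exact hall _ (fun x => by by_cases h : x ∈ C <;> simp [h] <;> norm_num)
end

section
/- Let E be a finite ground set, 𝒫 ⊆ 2^E nonempty, π : 𝒫 → (−∞,1], and ρ ∈ [0,1]^E fulfilling condition (⋆). Consider any run of the decomposition algorithm of length ℓ starting from (π,ρ), with sets S^(k), values ε^(k), and residuals π^(k), ρ^(k). Then for all k ∈ [ℓ]: (a) ρ^(k+1)_e = ρ_e − Σ_{i=1}^{k} 1[e ∈ S^(i)]·ε^(i) ≥ 0 for all e ∈ E; (b) Σ_{e∈P} ρ^(k+1)_e ≥ π^(k+1)_P = π_P − Σ_{i=1}^{k} ε^(i) for all P ∈ 𝒫; and (c) S^(k) ≠ ∅ and ε^(k) > 0. -/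
open Finset

variable {α : Type*} [Fintype α] [DecidableEq α]

/-- The dominance relation `P ⊑_{π,ρ} Q`. -/
def Dominates (π : Finset α → ℝ) (ρ : α → ℝ) (P Q : Finset α) : Prop :=
  P = Q ∨ (π P < π Q ∧ π P ≤ π Q - ∑ e ∈ Q \ P, ρ e)

/-- `P` is non-dominated (w.r.t. `π` and `ρ`) in `PP'`. -/
def NonDominated (π : Finset α → ℝ) (ρ : α → ℝ) (PP' : Finset (Finset α)) (P : Finset α) : Prop :=
  P ∈ PP' ∧ ∀ Q ∈ PP', Q ≠ P → ¬ Dominates π ρ P Q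

/-- `S` is an admissible support candidate (ASC) for `π` and `ρ`. -/
def IsASC (PP : Finset (Finset α)) (π : Finset α → ℝ) (ρ : α → ℝ) (S : Finset α) : Prop :=
  (∀ e ∈ S, 0 < ρ e) ∧
  (∀ P ∈ PP, ∑ e ∈ P, ρ e = π P → (S ∩ P).card ≤ 1) ∧
  (∀ P, NonDominated π ρ (PP.filter fun Q => 0 < π Q) P → 1 ≤ (S ∩ P).card)

/-- The step size `ε_{π,ρ}(S)`: the minimum of `min_{e ∈ S} ρ e`, `max_{P ∈ PP} π P`, and
`δ_{π,ρ}(S) = inf{(π P − ∑_{e∈P} ρ e)/(1 − |P ∩ S|) : P ∈ PP, |P ∩ S| > 1}` (the latter set of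
values being empty if no such `P` exists). -/
noncomputable def epsVal (PP : Finset (Finset α)) (π : Finset α → ℝ) (ρ : α → ℝ)
    (S : Finset α) : ℝ :=
  sInf (ρ '' (S : Set α) ∪ {sSup (π '' (PP : Set (Finset α)))} ∪
    {x : ℝ | ∃ P ∈ PP, 1 < (P ∩ S).card ∧
      x = (π P - ∑ e ∈ P, ρ e) / (1 - ((P ∩ S).card : ℝ))})

/-- A run of the decomposition algorithm of length `ℓ` starting from `(π, ρ)`: residual
requirements `πs`, residual marginals `ρs`, chosen admissible support candidates `Ss` and step
sizes `εs`, indexed by iterations `k = 1, …, ℓ`. -/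
def IsRun (PP : Finset (Finset α)) (π : Finset α → ℝ) (ρ : α → ℝ) (ℓ : ℕ)
    (πs : ℕ → Finset α → ℝ) (ρs : ℕ → α → ℝ) (Ss : ℕ → Finset α) (εs : ℕ → ℝ) : Prop :=
  πs 1 = π ∧ ρs 1 = ρ ∧
  ∀ k, 1 ≤ k → k ≤ ℓ →
    (∃ P ∈ PP, 0 < πs k P) ∧
    IsASC PP (πs k) (ρs k) (Ss k) ∧
    εs k = epsVal PP (πs k) (ρs k) (Ss k) ∧
    (∀ e, ρs (k + 1) e = ρs k e - (if e ∈ Ss k then εs k else 0)) ∧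
    (∀ P, πs (k + 1) P = πs k P - εs k)

lemma step_lemma (PP : Finset (Finset α)) (hPP : PP.Nonempty)
    (πk : Finset α → ℝ) (ρk : α → ℝ)
    (hpos : ∀ e, 0 ≤ ρk e) (hstar : ∀ P ∈ PP, πk P ≤ ∑ e ∈ P, ρk e)
    (hex : ∃ P ∈ PP, 0 < πk P) (S : Finset α) (hS : IsASC PP πk ρk S) :
    S.Nonempty ∧ 0 < epsVal PP πk ρk S ∧
    (∀ e, 0 ≤ ρk e - (if e ∈ S then epsVal PP πk ρk S else 0)) ∧
    (∀ P ∈ PP, πk P - epsVal PP πk ρk S ≤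
      ∑ e ∈ P, (ρk e - (if e ∈ S then epsVal PP πk ρk S else 0))) := by
  obtain ⟨hS1, hS2, hS3⟩ := hS
  set ε := epsVal PP πk ρk S with hεdef
  set A : Set ℝ := ρk '' (S : Set α) ∪ {sSup (πk '' (PP : Set (Finset α)))} ∪
    {x : ℝ | ∃ P ∈ PP, 1 < (P ∩ S).card ∧
      x = (πk P - ∑ e ∈ P, ρk e) / (1 - ((P ∩ S).card : ℝ))} with hAdef
  have hεA : ε = sInf A := rfl
  -- finiteness of A
  have hδsub : {x : ℝ | ∃ P ∈ PP, 1 < (P ∩ S).card ∧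
      x = (πk P - ∑ e ∈ P, ρk e) / (1 - ((P ∩ S).card : ℝ))} ⊆
      (fun P => (πk P - ∑ e ∈ P, ρk e) / (1 - ((P ∩ S).card : ℝ))) '' (PP : Set (Finset α)) := by
    rintro x ⟨P, hP, _, rfl⟩
    exact ⟨P, hP, rfl⟩
  have hAfin : A.Finite := by
    refine (((S.finite_toSet.image ρk).union (Set.finite_singleton _)).union
      (Set.Finite.subset (PP.finite_toSet.image _) hδsub))
  have hAne : A.Nonempty := ⟨sSup (πk '' (PP : Set (Finset α))), Or.inl (Or.inr rfl)⟩
  -- positivity of all members of A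
  have hApos : ∀ x ∈ A, 0 < x := by
    rintro x ((⟨e, he, rfl⟩ | hx) | ⟨P, hP, hc, rfl⟩)
    · exact hS1 e he
    · obtain ⟨P, hP, hπP⟩ := hex
      have hb : BddAbove (πk '' (PP : Set (Finset α))) :=
        (PP.finite_toSet.image πk).bddAbove
      have : πk P ≤ sSup (πk '' (PP : Set (Finset α))) :=
        le_csSup hb ⟨P, hP, rfl⟩
      simp only [Set.mem_singleton_iff] at hx
      rw [hx]
      linarith
    · have h1 : πk P < ∑ e ∈ P, ρk e := by
        rcases lt_or_eq_of_le (hstar P hP) with h | h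
        · exact h
        · exfalso
          have := hS2 P hP h.symm
          rw [Finset.inter_comm] at this
          omega
      have h2 : (1 : ℝ) - ((P ∩ S).card : ℝ) < 0 := by
        have : (1 : ℝ) < ((P ∩ S).card : ℝ) := by exact_mod_cast hc
        linarith
      exact div_pos_of_neg_of_neg (by linarith) h2
  have hεmem : ε ∈ A := hAne.csInf_mem hAfin
  have hεpos : 0 < ε := hApos ε hεmem
  have hεle : ∀ x ∈ A, ε ≤ x := fun x hx => csInf_le hAfin.bddBelow hx
  -- S nonempty
  have hSne : S.Nonempty := by
    have hfilne : ((PP.filter fun Q => 0 < πk Q)).Nonempty := by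
      obtain ⟨P, hP, hπP⟩ := hex
      exact ⟨P, Finset.mem_filter.mpr ⟨hP, hπP⟩⟩
    obtain ⟨P₀, hP₀, hmax⟩ := Finset.exists_max_image _ πk hfilne
    have hnd : NonDominated πk ρk (PP.filter fun Q => 0 < πk Q) P₀ := by
      refine ⟨hP₀, fun Q hQ hQne hdom => ?_⟩
      rcases hdom with h | ⟨h, _⟩
      · exact hQne h.symm
      · exact absurd (hmax Q hQ) (not_le.mpr h)
    have := hS3 P₀ hnd
    have : (S ∩ P₀).Nonempty := Finset.card_pos.mp (by omega)
    exact ⟨this.choose, Finset.mem_inter.mp this.choose_spec |>.1⟩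
  refine ⟨hSne, hεpos, ?_, ?_⟩
  · intro e
    by_cases he : e ∈ S
    · have : ε ≤ ρk e := hεle _ (Or.inl (Or.inl ⟨e, he, rfl⟩))
      simp [he]; linarith
    · simp [he]; exact hpos e
  · intro P hP
    have hsum : ∑ e ∈ P, (ρk e - (if e ∈ S then ε else 0)) =
        (∑ e ∈ P, ρk e) - ((P ∩ S).card : ℝ) * ε := by
      rw [Finset.sum_sub_distrib, Finset.sum_ite_mem, Finset.sum_const, nsmul_eq_mul]
    rw [hsum]
    have hstarP := hstar P hP
    by_cases hc : (P ∩ S).card ≤ 1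
    · have : ((P ∩ S).card : ℝ) ≤ 1 := by exact_mod_cast hc
      nlinarith
    · push_neg at hc
      have hεδ : ε ≤ (πk P - ∑ e ∈ P, ρk e) / (1 - ((P ∩ S).card : ℝ)) :=
        hεle _ (Or.inr ⟨P, hP, hc, rfl⟩)
      have h2 : (1 : ℝ) - ((P ∩ S).card : ℝ) < 0 := by
        have : (1 : ℝ) < ((P ∩ S).card : ℝ) := by exact_mod_cast hc
        linarith
      rw [le_div_iff_of_neg h2] at hεδ
      nlinarith

/-- Invariants of the decomposition algorithm: for every iteration `k` of a run, (a) the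
residual marginals equal `ρ` minus the accumulated mass and are nonnegative, (b) the residual
marginals satisfy (⋆) for the residual requirements `π^{(k+1)}_P = π_P − ∑_{i≤k} ε^{(i)}`, and
(c) `S^(k) ≠ ∅` and `ε^(k) > 0`. -/
theorem run_invariants (PP : Finset (Finset α)) (hPP : PP.Nonempty)
    (π : Finset α → ℝ) (ρ : α → ℝ)
    (hπ1 : ∀ P ∈ PP, π P ≤ 1) (hρ : ∀ e, 0 ≤ ρ e ∧ ρ e ≤ 1)
    (hstar : ∀ P ∈ PP, π P ≤ ∑ e ∈ P, ρ e)
    (ℓ : ℕ) (πs : ℕ → Finset α → ℝ) (ρs : ℕ → α → ℝ) (Ss : ℕ → Finset α) (εs : ℕ → ℝ)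
    (hrun : IsRun PP π ρ ℓ πs ρs Ss εs) :
    ∀ k, 1 ≤ k → k ≤ ℓ →
      (∀ e, ρs (k + 1) e = ρ e - ∑ i ∈ Finset.Icc 1 k, (if e ∈ Ss i then εs i else 0) ∧
        0 ≤ ρs (k + 1) e) ∧
      (∀ P ∈ PP, πs (k + 1) P ≤ ∑ e ∈ P, ρs (k + 1) e ∧
        πs (k + 1) P = π P - ∑ i ∈ Finset.Icc 1 k, εs i) ∧
      ((Ss k).Nonempty ∧ 0 < εs k) := by
  obtain ⟨hπ1', hρ1', hstep⟩ := hrun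
  -- State invariant at index k+1 (for k ≤ ℓ)
  have key : ∀ k, k ≤ ℓ →
      (∀ e, ρs (k + 1) e = ρ e - ∑ i ∈ Finset.Icc 1 k, (if e ∈ Ss i then εs i else 0) ∧
        0 ≤ ρs (k + 1) e) ∧
      (∀ P ∈ PP, πs (k + 1) P ≤ ∑ e ∈ P, ρs (k + 1) e ∧
        πs (k + 1) P = π P - ∑ i ∈ Finset.Icc 1 k, εs i) := by
    intro k
    induction k with
    | zero =>
      intro _
      simp only [zero_add, hπ1', hρ1']
      constructor
      · intro e
        simp [hρ1', (hρ e).1]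
      · intro P hP
        simp [hstar P hP]
    | succ n ih =>
      intro hn
      have hn' : n ≤ ℓ := by omega
      obtain ⟨iha, ihb⟩ := ih hn'
      obtain ⟨hex, hASC, hεeq, hρrec, hπrec⟩ := hstep (n + 1) (by omega) hn
      have hex' : ∃ P ∈ PP, 0 < πs (n + 1) P := hex
      have hsl := step_lemma PP hPP (πs (n + 1)) (ρs (n + 1))
        (fun e => (iha e).2) (fun P hP => (ihb P hP).1) hex' (Ss (n + 1)) hASC
      obtain ⟨_, hεpos, hnonneg, hstar'⟩ := hsl
      rw [← hεeq] at hεpos hnonneg hstar'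
      constructor
      · intro e
        constructor
        · rw [hρrec e, (iha e).1, Finset.sum_Icc_succ_top (by omega : 1 ≤ n + 1)]
          ring
        · rw [hρrec e]
          exact hnonneg e
      · intro P hP
        constructor
        · rw [hπrec P]
          calc πs (n + 1) P - εs (n + 1)
              ≤ ∑ e ∈ P, (ρs (n + 1) e - (if e ∈ Ss (n + 1) then εs (n + 1) else 0)) :=
                hstar' P hP
            _ = ∑ e ∈ P, ρs (n + 1 + 1) e := by
                exact Finset.sum_congr rfl fun e _ => (hρrec e).symm
        · rw [hπrec P, (ihb P hP).2, Finset.sum_Icc_succ_top (by omega : 1 ≤ n + 1)]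
          ring
  intro k hk1 hkℓ
  refine ⟨(key k hkℓ).1, (key k hkℓ).2, ?_⟩
  -- part (c): use state invariant at k = (k-1)+1
  obtain ⟨m, rfl⟩ : ∃ m, k = m + 1 := ⟨k - 1, by omega⟩
  have hm : m ≤ ℓ := by omega
  obtain ⟨iha, ihb⟩ := key m hm
  obtain ⟨hex, hASC, hεeq, _, _⟩ := hstep (m + 1) (by omega) hkℓ
  have hsl := step_lemma PP hPP (πs (m + 1)) (ρs (m + 1))
    (fun e => (iha e).2) (fun P hP => (ihb P hP).1) hex (Ss (m + 1)) hASC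
  exact ⟨hsl.1, hεeq ▸ hsl.2.1⟩
end

section
/- Let E be a finite ground set, 𝒫 ⊆ 2^E nonempty, π : 𝒫 → (−∞,1], and ρ ∈ [0,1]^E fulfilling condition (⋆). Then every run of the decomposition algorithm starting from (π,ρ) has length ℓ at most C(|E|,2) + |E|, where C(|E|,2) = |E|(|E|−1)/2. -/
open Finset

variable {α : Type*} [Fintype α] [DecidableEq α]

set_option linter.unusedSectionVars false

section AuxLemmas

lemma sum_sub_ite (P S : Finset α) (ρ : α → ℝ) (ε : ℝ) :
    ∑ x ∈ P, (ρ x - if x ∈ S then ε else 0)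
      = ∑ x ∈ P, ρ x - ((P ∩ S).card : ℝ) * ε := by
  rw [Finset.sum_sub_distrib, Finset.sum_ite_mem, Finset.sum_const, nsmul_eq_mul]

lemma dominates_trans' (π : Finset α → ℝ) (ρ : α → ℝ) (h1 : ∀ e, 0 ≤ ρ e)
    {P Q R : Finset α} (h : Dominates π ρ P Q) (h' : Dominates π ρ Q R) :
    Dominates π ρ P R := by
  rcases h with rfl | ⟨hlt1, hle1⟩
  · exact h'
  rcases h' with rfl | ⟨hlt2, hle2⟩
  · exact Or.inr ⟨hlt1, hle1⟩
  refine Or.inr ⟨hlt1.trans hlt2, ?_⟩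
  have hsub : R \ P ⊆ (R \ Q) ∪ (Q \ P) := by
    intro x hx
    simp only [Finset.mem_sdiff, Finset.mem_union] at *
    tauto
  have h5 : ∑ x ∈ R \ P, ρ x ≤ ∑ x ∈ (R \ Q) ∪ (Q \ P), ρ x :=
    Finset.sum_le_sum_of_subset_of_nonneg hsub fun i _ _ => h1 i
  have h6 : ∑ x ∈ (R \ Q) ∪ (Q \ P), ρ x ≤ ∑ x ∈ R \ Q, ρ x + ∑ x ∈ Q \ P, ρ x := by
    have h7 := Finset.sum_union_inter (s₁ := R \ Q) (s₂ := Q \ P) (f := ρ)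
    have h8 : 0 ≤ ∑ x ∈ (R \ Q) ∩ (Q \ P), ρ x := Finset.sum_nonneg fun i _ => h1 i
    linarith
  linarith

lemma dominates_tight (π : Finset α → ℝ) (ρ : α → ℝ) (h1 : ∀ e, 0 ≤ ρ e)
    {Q R : Finset α} (hstarR : π R ≤ ∑ x ∈ R, ρ x)
    (ht : ∑ x ∈ Q, ρ x = π Q) (hdom : Dominates π ρ Q R) :
    (∑ x ∈ R, ρ x = π R) ∧ ∀ x ∈ Q, 0 < ρ x → x ∈ R := by
  rcases hdom with rfl | ⟨hlt, hle⟩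
  · exact ⟨ht, fun x hx _ => hx⟩
  · have hsplitR : ∑ x ∈ R ∩ Q, ρ x + ∑ x ∈ R \ Q, ρ x = ∑ x ∈ R, ρ x :=
      Finset.sum_inter_add_sum_sdiff R Q ρ
    have hsplitQ : ∑ x ∈ Q ∩ R, ρ x + ∑ x ∈ Q \ R, ρ x = ∑ x ∈ Q, ρ x :=
      Finset.sum_inter_add_sum_sdiff Q R ρ
    have hRQQ : ∑ x ∈ R ∩ Q, ρ x ≤ ∑ x ∈ Q, ρ x :=
      Finset.sum_le_sum_of_subset_of_nonneg Finset.inter_subset_right fun i _ _ => h1 i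
    have hQR : ∑ x ∈ Q ∩ R, ρ x = ∑ x ∈ R ∩ Q, ρ x := by rw [Finset.inter_comm]
    have htR : ∑ x ∈ R, ρ x = π R := le_antisymm (by linarith) hstarR
    have hQdiff : ∑ x ∈ Q \ R, ρ x ≤ 0 := by linarith
    have hzero : ∀ x ∈ Q \ R, ρ x = 0 := by
      have h0 : ∑ x ∈ Q \ R, ρ x = 0 :=
        le_antisymm hQdiff (Finset.sum_nonneg fun i _ => h1 i)
      exact (Finset.sum_eq_zero_iff_of_nonneg fun i _ => h1 i).mp h0
    refine ⟨htR, fun x hx hpx => ?_⟩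
    by_contra hxR
    exact absurd (hzero x (Finset.mem_sdiff.mpr ⟨hx, hxR⟩)) (ne_of_gt hpx)

/-- The candidate set for `epsVal`. -/
def epsSet (PP : Finset (Finset α)) (π : Finset α → ℝ) (ρ : α → ℝ) (S : Finset α) : Set ℝ :=
  ρ '' (S : Set α) ∪ {sSup (π '' (PP : Set (Finset α)))} ∪
    {x : ℝ | ∃ P ∈ PP, 1 < (P ∩ S).card ∧
      x = (π P - ∑ e ∈ P, ρ e) / (1 - ((P ∩ S).card : ℝ))}

lemma epsVal_eq_sInf (PP : Finset (Finset α)) (π : Finset α → ℝ) (ρ : α → ℝ) (S : Finset α) :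
    epsVal PP π ρ S = sInf (epsSet PP π ρ S) := rfl

lemma epsSet_finite (PP : Finset (Finset α)) (π : Finset α → ℝ) (ρ : α → ℝ) (S : Finset α) :
    (epsSet PP π ρ S).Finite := by
  refine Set.Finite.union (Set.Finite.union (S.finite_toSet.image ρ) (Set.finite_singleton _)) ?_
  refine Set.Finite.subset (PP.finite_toSet.image
    (fun P => (π P - ∑ e ∈ P, ρ e) / (1 - ((P ∩ S).card : ℝ)))) ?_
  rintro x ⟨P, hP, _, rfl⟩
  exact ⟨P, hP, rfl⟩

lemma epsVal_mem (PP : Finset (Finset α)) (π : Finset α → ℝ) (ρ : α → ℝ) (S : Finset α) :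
    epsVal PP π ρ S ∈ epsSet PP π ρ S :=
  Set.Nonempty.csInf_mem ⟨_, Or.inl (Or.inr rfl)⟩ (epsSet_finite PP π ρ S)

lemma epsVal_le (PP : Finset (Finset α)) (π : Finset α → ℝ) (ρ : α → ℝ) (S : Finset α)
    {x : ℝ} (hx : x ∈ epsSet PP π ρ S) : epsVal PP π ρ S ≤ x :=
  csInf_le (epsSet_finite PP π ρ S).bddBelow hx

lemma eps_pos (PP : Finset (Finset α)) (π : Finset α → ℝ) (ρ : α → ℝ) (S : Finset α)
    (h1 : ∀ e, 0 ≤ ρ e) (h2 : ∀ P ∈ PP, π P ≤ ∑ e ∈ P, ρ e)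
    (hasc : IsASC PP π ρ S) (hex : ∃ P ∈ PP, 0 < π P) :
    0 < epsVal PP π ρ S := by
  rcases epsVal_mem PP π ρ S with (hA | hB) | hC
  · obtain ⟨e, he, heq⟩ := hA
    rw [← heq]
    exact hasc.1 e he
  · rw [Set.mem_singleton_iff] at hB
    rw [hB]
    obtain ⟨P, hP, hp⟩ := hex
    exact lt_of_lt_of_le hp
      (le_csSup ((PP.finite_toSet.image π).bddAbove) ⟨P, hP, rfl⟩)
  · obtain ⟨P, hP, hm, heq⟩ := hC
    rw [heq]
    apply div_pos_of_neg_of_neg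
    · rcases eq_or_lt_of_le (h2 P hP) with h | h
      · have hc := hasc.2.1 P hP h.symm
        rw [Finset.inter_comm] at hc
        omega
      · linarith
    · have hmr : (1 : ℝ) < ((P ∩ S).card : ℝ) := by exact_mod_cast hm
      linarith

lemma star_next (PP : Finset (Finset α)) (π π' : Finset α → ℝ) (ρ ρ' : α → ℝ)
    (S : Finset α) (ε : ℝ)
    (h1 : ∀ e, 0 ≤ ρ e) (h2 : ∀ P ∈ PP, π P ≤ ∑ e ∈ P, ρ e) (hasc : IsASC PP π ρ S)
    (hε : ε = epsVal PP π ρ S) (hε0 : 0 ≤ ε)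
    (hρ' : ∀ e, ρ' e = ρ e - if e ∈ S then ε else 0) (hπ' : ∀ P, π' P = π P - ε) :
    (∀ e, 0 ≤ ρ' e) ∧ ∀ P ∈ PP, π' P ≤ ∑ e ∈ P, ρ' e := by
  constructor
  · intro e
    rw [hρ' e]
    split_ifs with he
    · have hle : ε ≤ ρ e := hε ▸ epsVal_le PP π ρ S (Or.inl (Or.inl ⟨e, he, rfl⟩))
      linarith
    · rw [sub_zero]; exact h1 e
  · intro P hP
    have hsum : ∑ x ∈ P, ρ' x = ∑ x ∈ P, ρ x - ((P ∩ S).card : ℝ) * ε := by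
      rw [Finset.sum_congr rfl fun x _ => hρ' x, sum_sub_ite]
    rw [hπ' P, hsum]
    rcases Nat.lt_or_ge 1 (P ∩ S).card with hm | hm
    · have hle : ε ≤ (π P - ∑ e ∈ P, ρ e) / (1 - ((P ∩ S).card : ℝ)) :=
        hε ▸ epsVal_le PP π ρ S (Or.inr ⟨P, hP, hm, rfl⟩)
      have hden : (1 : ℝ) - ((P ∩ S).card : ℝ) < 0 := by
        have : (1 : ℝ) < ((P ∩ S).card : ℝ) := by exact_mod_cast hm
        linarith
      rw [le_div_iff_of_neg hden] at hle
      nlinarith [hle]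
    · have hmR : ((P ∩ S).card : ℝ) ≤ 1 := by exact_mod_cast hm
      have hsp := h2 P hP
      nlinarith [mul_le_mul_of_nonneg_right hmR hε0]

lemma nondominated_exists (PP : Finset (Finset α)) (π : Finset α → ℝ) (ρ : α → ℝ)
    (hex : ∃ P ∈ PP, 0 < π P) :
    ∃ P, NonDominated π ρ (PP.filter fun Q => 0 < π Q) P := by
  classical
  obtain ⟨P, hP, hp⟩ := hex
  have hne : (PP.filter fun Q => 0 < π Q).Nonempty := ⟨P, Finset.mem_filter.mpr ⟨hP, hp⟩⟩
  obtain ⟨M, hM, hmax⟩ := Finset.exists_max_image _ π hne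
  refine ⟨M, hM, fun Q hQ hne' hdom => ?_⟩
  rcases hdom with rfl | ⟨hlt, _⟩
  · exact hne' rfl
  · exact absurd (hmax Q hQ) (not_le.mpr hlt)

lemma persist (PP : Finset (Finset α)) (π π' : Finset α → ℝ) (ρ ρ' : α → ℝ)
    (S : Finset α) (ε : ℝ)
    (h1 : ∀ e, 0 ≤ ρ e) (h2 : ∀ P ∈ PP, π P ≤ ∑ e ∈ P, ρ e) (hasc : IsASC PP π ρ S)
    (hρ' : ∀ e, ρ' e = ρ e - if e ∈ S then ε else 0) (hπ' : ∀ P, π' P = π P - ε)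
    (Q : Finset α) (hQ : Q ∈ PP) (ht : ∑ x ∈ Q, ρ x = π Q)
    (e f : α) (he : e ∈ Q) (hf : f ∈ Q) (hpe : 0 < ρ e) (hpf : 0 < ρ f) :
    ∃ R ∈ PP, (∑ x ∈ R, ρ' x = π' R) ∧ e ∈ R ∧ f ∈ R := by
  classical
  set T := PP.filter (fun R => Dominates π ρ Q R) with hT
  have hQT : Q ∈ T := Finset.mem_filter.mpr ⟨hQ, Or.inl rfl⟩
  obtain ⟨R, hRT, hmax⟩ := Finset.exists_max_image T π ⟨Q, hQT⟩
  obtain ⟨hRP, hdom⟩ := Finset.mem_filter.mp hRT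
  obtain ⟨htR, hsub⟩ := dominates_tight π ρ h1 (h2 R hRP) ht hdom
  have heR : e ∈ R := hsub e he hpe
  have hfR : f ∈ R := hsub f hf hpf
  have hπR : 0 < π R := by
    have hle : ρ e ≤ ∑ x ∈ R, ρ x := Finset.single_le_sum (fun i _ => h1 i) heR
    linarith
  have hndR : NonDominated π ρ (PP.filter fun Q' => 0 < π Q') R := by
    refine ⟨Finset.mem_filter.mpr ⟨hRP, hπR⟩, fun Q' hQ' hne hdom' => ?_⟩
    have hQ'P := (Finset.mem_filter.mp hQ').1
    have hdomQQ' : Dominates π ρ Q Q' := dominates_trans' π ρ h1 hdom hdom'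
    have hmax' := hmax Q' (Finset.mem_filter.mpr ⟨hQ'P, hdomQQ'⟩)
    rcases hdom' with rfl | ⟨hlt, _⟩
    · exact hne rfl
    · linarith
  have hc1 := hasc.2.2 R hndR
  have hc2 := hasc.2.1 R hRP htR
  have hcard : (R ∩ S).card = 1 := by rw [Finset.inter_comm]; omega
  refine ⟨R, hRP, ?_, heR, hfR⟩
  rw [Finset.sum_congr rfl fun x _ => hρ' x, sum_sub_ite, hcard, hπ' R, htR]
  push_cast
  ring

end AuxLemmas

/-- Every run of the decomposition algorithm has length at most `C(|E|,2) + |E|`. -/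
theorem run_length_bound (PP : Finset (Finset α)) (hPP : PP.Nonempty)
    (π : Finset α → ℝ) (ρ : α → ℝ)
    (hπ1 : ∀ P ∈ PP, π P ≤ 1) (hρ : ∀ e, 0 ≤ ρ e ∧ ρ e ≤ 1)
    (hstar : ∀ P ∈ PP, π P ≤ ∑ e ∈ P, ρ e)
    (ℓ : ℕ) (πs : ℕ → Finset α → ℝ) (ρs : ℕ → α → ℝ) (Ss : ℕ → Finset α) (εs : ℕ → ℝ)
    (hrun : IsRun PP π ρ ℓ πs ρs Ss εs) :
    ℓ ≤ (Fintype.card α).choose 2 + Fintype.card α := by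
  classical
  obtain ⟨hπ0, hρ0, hstep⟩ := hrun
  rcases Nat.eq_zero_or_pos ℓ with rfl | hℓ1
  · exact Nat.zero_le _
  set n := Fintype.card α with hn
  -- Invariants: nonnegativity of ρ and condition (⋆) are preserved.
  have INV : ∀ k, 1 ≤ k → k ≤ ℓ + 1 →
      (∀ e, 0 ≤ ρs k e) ∧ ∀ P ∈ PP, πs k P ≤ ∑ e ∈ P, ρs k e := by
    intro k hk1
    induction k, hk1 using Nat.le_induction with
    | base =>
      intro _
      rw [hπ0, hρ0]
      exact ⟨fun e => (hρ e).1, hstar⟩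
    | succ k hk ih =>
      intro hk2
      have hkℓ : k ≤ ℓ := by omega
      obtain ⟨hex, hasc, heps, hρup, hπup⟩ := hstep k hk hkℓ
      obtain ⟨i1, i2⟩ := ih (by omega)
      have hpos := eps_pos PP (πs k) (ρs k) (Ss k) i1 i2 hasc hex
      exact star_next PP (πs k) (πs (k + 1)) (ρs k) (ρs (k + 1)) (Ss k) (εs k)
        i1 i2 hasc heps (by rw [heps]; exact hpos.le) hρup hπup
  have EPS0 : ∀ k, 1 ≤ k → k ≤ ℓ → 0 < εs k := by
    intro k h1 h2
    obtain ⟨hex, hasc, heps, _, _⟩ := hstep k h1 h2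
    obtain ⟨i1, i2⟩ := INV k h1 (by omega)
    rw [heps]
    exact eps_pos PP _ _ _ i1 i2 hasc hex
  -- monotonicity of ρ
  have MONO : ∀ e k j, 1 ≤ k → k ≤ j → j ≤ ℓ + 1 → ρs j e ≤ ρs k e := by
    intro e k j hk1 hkj
    induction j, hkj using Nat.le_induction with
    | base => intro _; exact le_rfl
    | succ j hj ih =>
      intro hj2
      have h := (hstep j (by omega) (by omega)).2.2.2.1 e
      have hε := EPS0 j (by omega) (by omega)
      have hstep' : ρs (j + 1) e ≤ ρs j e := by
        rw [h]; split_ifs <;> linarith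
      exact hstep'.trans (ih (by omega))
  -- a surviving element at step ℓ
  obtain ⟨hexℓ, hascℓ, _, _, _⟩ := hstep ℓ hℓ1 le_rfl
  obtain ⟨P₀, hP₀⟩ := nondominated_exists PP (πs ℓ) (ρs ℓ) hexℓ
  have h1card := hascℓ.2.2 P₀ hP₀
  obtain ⟨estar, hestar⟩ := Finset.card_pos.mp (by omega : 0 < (Ss ℓ ∩ P₀).card)
  have hestarS := (Finset.mem_inter.mp hestar).1
  have hestarpos : 0 < ρs ℓ estar := hascℓ.1 estar hestarS
  have hα : 1 ≤ n := by rw [hn]; exact Fintype.card_pos_iff.mpr ⟨estar⟩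
  -- coverage persistence
  have covmono : ∀ (e f : α) (k j : ℕ), 1 ≤ k → k ≤ j → j ≤ ℓ →
      0 < ρs j e → 0 < ρs j f →
      (∃ Q ∈ PP, (∑ x ∈ Q, ρs k x = πs k Q) ∧ e ∈ Q ∧ f ∈ Q) →
      ∃ Q ∈ PP, (∑ x ∈ Q, ρs j x = πs j Q) ∧ e ∈ Q ∧ f ∈ Q := by
    intro e f k j hk1 hkj
    induction j, hkj using Nat.le_induction with
    | base => exact fun _ _ _ h => h
    | succ j hj ih =>
      intro hj2 hpe hpf hc
      have hjℓ : j ≤ ℓ := by omega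
      have hpe' : 0 < ρs j e := lt_of_lt_of_le hpe (MONO e j (j + 1) (by omega) (by omega) (by omega))
      have hpf' : 0 < ρs j f := lt_of_lt_of_le hpf (MONO f j (j + 1) (by omega) (by omega) (by omega))
      obtain ⟨Q, hQ, ht, heQ, hfQ⟩ := ih hjℓ hpe' hpf' hc
      obtain ⟨_, hasc, _, hρup, hπup⟩ := hstep j (by omega) hjℓ
      obtain ⟨i1, i2⟩ := INV j (by omega) (by omega)
      exact persist PP (πs j) (πs (j + 1)) (ρs j) (ρs (j + 1)) (Ss j) (εs j)
        i1 i2 hasc hρup hπup Q hQ ht e f heQ hfQ hpe' hpf'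
  -- classification of steps 1, …, ℓ-1
  set Iset := Finset.Icc 1 (ℓ - 1) with hI
  set RS := Iset.filter (fun k => ∃ e ∈ Ss k, εs k = ρs k e) with hRS
  set DS := Iset.filter (fun k => ¬ ∃ e ∈ Ss k, εs k = ρs k e) with hDS
  have hsplit : RS.card + DS.card = ℓ - 1 := by
    have h := Finset.card_filter_add_card_filter_not
      (s := Iset) (p := fun k => ∃ e ∈ Ss k, εs k = ρs k e)
    rw [Nat.card_Icc] at h
    rw [hRS, hDS]
    omega
  -- ρ-steps: an element leaves the support forever
  have hRSfacts : ∀ k, ∃ e, k ∈ RS → 0 < ρs k e ∧ ρs (k + 1) e = 0 := by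
    intro k
    by_cases hk : k ∈ RS
    · obtain ⟨hkI, e, heS, hee⟩ := Finset.mem_filter.mp hk
      refine ⟨e, fun _ => ?_⟩
      obtain ⟨hk1, hk2⟩ := Finset.mem_Icc.mp hkI
      obtain ⟨_, hasc, _, hρup, _⟩ := hstep k hk1 (by omega)
      refine ⟨hasc.1 e heS, ?_⟩
      rw [hρup e, if_pos heS, hee]
      ring
    · exact ⟨estar, fun h => absurd h hk⟩
  choose rse hrse using hRSfacts
  have hRcard : RS.card ≤ n - 1 := by
    have hmapsto : ∀ k ∈ RS, rse k ∈ Finset.univ.erase estar := by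
      intro k hk
      obtain ⟨hp, hz⟩ := hrse k hk
      have hkI := Finset.mem_Icc.mp (Finset.mem_filter.mp hk).1
      refine Finset.mem_erase.mpr ⟨?_, Finset.mem_univ _⟩
      intro heq
      have hm := MONO (rse k) (k + 1) ℓ (by omega) (by omega) (by omega)
      rw [hz, heq] at hm
      linarith
    have key : ∀ a b, a ∈ RS → b ∈ RS → a < b → rse a ≠ rse b := by
      intro a b ha hb hab heq
      obtain ⟨hpa, hza⟩ := hrse a ha
      obtain ⟨hpb, _⟩ := hrse b hb
      have hbI := Finset.mem_Icc.mp (Finset.mem_filter.mp hb).1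
      have hm := MONO (rse a) (a + 1) b (by omega) (by omega) (by omega)
      rw [hza, heq] at hm
      linarith
    have hinj : Set.InjOn rse ↑RS := by
      intro a ha b hb heq
      rcases lt_trichotomy a b with h | h | h
      · exact absurd heq (key a b ha hb h)
      · exact h
      · exact absurd heq.symm (key b a hb ha h)
    calc RS.card ≤ (Finset.univ.erase estar).card :=
          Finset.card_le_card_of_injOn rse hmapsto hinj
      _ = n - 1 := by rw [Finset.card_erase_of_mem (Finset.mem_univ _), Finset.card_univ]
  -- δ-steps: a new pair gets covered by a tight set
  have hDSfacts : ∀ k, ∃ e f, k ∈ DS →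
      e ≠ f ∧ e ∈ Ss k ∧ f ∈ Ss k ∧
      ∃ Q ∈ PP, (∑ x ∈ Q, ρs (k + 1) x = πs (k + 1) Q) ∧ e ∈ Q ∧ f ∈ Q := by
    intro k
    by_cases hk : k ∈ DS
    · obtain ⟨hkI, hnR⟩ := Finset.mem_filter.mp hk
      obtain ⟨hk1, hk2⟩ := Finset.mem_Icc.mp hkI
      have hkℓ : k ≤ ℓ := by omega
      obtain ⟨hex, hasc, heps, hρup, hπup⟩ := hstep k hk1 hkℓ
      obtain ⟨i1, i2⟩ := INV k hk1 (by omega)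
      have hmem : εs k ∈ epsSet PP (πs k) (ρs k) (Ss k) := by
        rw [heps]; exact epsVal_mem PP _ _ _
      rcases hmem with (hA | hB) | hC
      · obtain ⟨e, he, hee⟩ := hA
        exact absurd ⟨e, he, hee.symm⟩ hnR
      · exfalso
        rw [Set.mem_singleton_iff] at hB
        obtain ⟨P, hP, hPpos⟩ := (hstep (k + 1) (by omega) (by omega)).1
        have hle : πs k P ≤ sSup (πs k '' ↑PP) :=
          le_csSup ((PP.finite_toSet.image (πs k)).bddAbove) ⟨P, hP, rfl⟩
        rw [hπup P, hB] at hPpos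
        linarith
      · obtain ⟨P, hP, hm, hform⟩ := hC
        obtain ⟨e, hePS, f, hfPS, hef⟩ := Finset.one_lt_card.mp hm
        obtain ⟨heP, heS⟩ := Finset.mem_inter.mp hePS
        obtain ⟨hfP, hfS⟩ := Finset.mem_inter.mp hfPS
        refine ⟨e, f, fun _ => ⟨hef, heS, hfS, P, hP, ?_, heP, hfP⟩⟩
        have hsum : ∑ x ∈ P, ρs (k + 1) x
            = ∑ x ∈ P, ρs k x - ((P ∩ Ss k).card : ℝ) * εs k := by
          rw [Finset.sum_congr rfl fun x _ => hρup x, sum_sub_ite]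
        have hd : (1 : ℝ) - ((P ∩ Ss k).card : ℝ) ≠ 0 := by
          have : (1 : ℝ) < ((P ∩ Ss k).card : ℝ) := by exact_mod_cast hm
          linarith
        have h9 : εs k * (1 - ((P ∩ Ss k).card : ℝ)) = πs k P - ∑ x ∈ P, ρs k x :=
          (eq_div_iff hd).mp hform
        rw [hsum, hπup P]
        linear_combination h9
    · exact ⟨estar, estar, fun h => absurd h hk⟩
  choose de df hde using hDSfacts
  have hDcard : DS.card ≤ n.choose 2 := by
    have hmapsto : ∀ k ∈ DS, ({de k, df k} : Finset α) ∈ Finset.univ.powersetCard 2 := by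
      intro k hk
      obtain ⟨hne, _, _, _⟩ := hde k hk
      exact Finset.mem_powersetCard.mpr ⟨Finset.subset_univ _, Finset.card_pair hne⟩
    have key : ∀ a b, a ∈ DS → b ∈ DS → a < b →
        ({de a, df a} : Finset α) ≠ {de b, df b} := by
      intro a b ha hb hab heq
      obtain ⟨hnea, hSa, hSfa, hcova⟩ := hde a ha
      obtain ⟨hneb, hSb, hSfb, _⟩ := hde b hb
      have hbI := Finset.mem_Icc.mp (Finset.mem_filter.mp hb).1
      have hbℓ : b ≤ ℓ := by omega
      obtain ⟨_, hascb, _, _, _⟩ := hstep b hbI.1 hbℓ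
      have hdeb : de a ∈ Ss b := by
        have hmem : de a ∈ ({de b, df b} : Finset α) := by
          rw [← heq]; exact Finset.mem_insert_self _ _
        rcases Finset.mem_insert.mp hmem with h | h
        · rw [h]; exact hSb
        · rw [Finset.mem_singleton.mp h]; exact hSfb
      have hdfb : df a ∈ Ss b := by
        have hmem : df a ∈ ({de b, df b} : Finset α) := by
          rw [← heq]
          exact Finset.mem_insert.mpr (Or.inr (Finset.mem_singleton_self _))
        rcases Finset.mem_insert.mp hmem with h | h
        · rw [h]; exact hSb
        · rw [Finset.mem_singleton.mp h]; exact hSfb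
      have hpe : 0 < ρs b (de a) := hascb.1 _ hdeb
      have hpf : 0 < ρs b (df a) := hascb.1 _ hdfb
      obtain ⟨Q, hQ, ht, heQ, hfQ⟩ :=
        covmono (de a) (df a) (a + 1) b (by omega) (by omega) hbℓ hpe hpf hcova
      have h2 := hascb.2.1 Q hQ ht
      have h3 : 1 < (Ss b ∩ Q).card := by
        refine Finset.one_lt_card.mpr ⟨de a, ?_, df a, ?_, hnea⟩
        · exact Finset.mem_inter.mpr ⟨hdeb, heQ⟩
        · exact Finset.mem_inter.mpr ⟨hdfb, hfQ⟩
      omega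
    have hinj : Set.InjOn (fun k => ({de k, df k} : Finset α)) ↑DS := by
      intro a ha b hb heq
      rcases lt_trichotomy a b with h | h | h
      · exact absurd heq (key a b ha hb h)
      · exact h
      · exact absurd heq.symm (key b a hb ha h)
    calc DS.card ≤ (Finset.univ.powersetCard 2 : Finset (Finset α)).card :=
          Finset.card_le_card_of_injOn _ hmapsto hinj
      _ = n.choose 2 := by rw [Finset.card_powersetCard, Finset.card_univ]
  omega
end
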